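/- Let b₂ ∈ {1, 2}, b₃ ∈ {1, 5}, and b be an integer with 6b + 3 + 2b₂ + b₃ > 0. Let G be the group with presentation ⟨s₁, s₂, s₃, h | [sᵢ,h] for i = 1,2,3, s₁²h, s₂³h^{b₂}, s₃⁶h^{b₃}, s₁s₂s₃h^{-b}⟩. Then the abelianization of G is cyclic of order 6c, where c = 6b + 3 + 2b₂ + b₃, it is generated by the image of s₂s₁⁻¹, and the image of s₁ equals 3(2b₂ − 3) times this generator. -/

import Mathlib

lemma key_module_M236 {M : Type*} [AddCommGroup M] (b b₂ b₃ : ℤ) (hb : b₂ * b₂ = 3 * b₂ - 2)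
    (X Y Z H : M)
    (r1 : (2:ℤ) • X + H = 0) (r2 : (3:ℤ) • Y + b₂ • H = 0)
    (r3 : (6:ℤ) • Z + b₃ • H = 0) (r4 : X + Y + Z + (-b) • H = 0) :
    ((6*(6*b+3+2*b₂+b₃)) : ℤ) • (Y - X) = 0 ∧
    ((6*b₂-9) : ℤ) • (Y - X) = X ∧
    ((6*b₂-8) : ℤ) • (Y - X) = Y ∧
    ((18*b-12*b*b₂-12*b₂+17) : ℤ) • (Y - X) = Z ∧
    ((18-12*b₂) : ℤ) • (Y - X) = H := by
  have h0 : (2*b₂*b₂-6*b₂+4 : ℤ) = 0 := by linarith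
  have hH : ((2*b₂*b₂-6*b₂+4 : ℤ)) • H = 0 := by rw [h0, zero_smul]
  have hX : ((6*b₂-9) : ℤ) • (Y - X) = X := by
    linear_combination (norm := module) (2*b₂-3 : ℤ) • r2 + (4-3*b₂ : ℤ) • r1 - hH
  have hY : ((6*b₂-8) : ℤ) • (Y - X) = Y := by
    linear_combination (norm := module) (2*b₂-3 : ℤ) • r2 + (4-3*b₂ : ℤ) • r1 - hH
  have hH' : ((18-12*b₂) : ℤ) • (Y - X) = H := by
    linear_combination (norm := module) (6-4*b₂ : ℤ) • r2 + (6*b₂-9 : ℤ) • r1 + (2:ℤ) • hH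
  have hZ : ((18*b-12*b*b₂-12*b₂+17) : ℤ) • (Y - X) = Z := by
    linear_combination (norm := module) (-1 : ℤ) • r4 - hX - hY + b • hH'
  have hord : ((6*(6*b+3+2*b₂+b₃)) : ℤ) • (Y - X) = 0 := by
    linear_combination (norm := module) (-3*(6*b+3+2*b₂+b₃)+9-6*b₂ : ℤ) • r1 +
      (2*(6*b+3+2*b₂+b₃)+6-4*b₂ : ℤ) • r2 + (3-2*b₂ : ℤ) • r3 + (-18+12*b₂ : ℤ) • r4
  exact ⟨hord, hX, hY, hZ, hH'⟩

/-- Relations of the fundamental group of `M_236(b,b₂,b₃)`: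
generators `s₁ = 0`, `s₂ = 1`, `s₃ = 2`, `h = 3`;
relations `[sᵢ,h]` (`i = 1,2,3`), `s₁²h`, `s₂³h^{b₂}`, `s₃⁶h^{b₃}`, `s₁s₂s₃h^{-b}`. -/
def rels236 (b b₂ b₃ : ℤ) : Set (FreeGroup (Fin 4)) :=
  { r | (∃ i : Fin 3, r = .of i.castSucc * .of 3 * (.of i.castSucc)⁻¹ * (.of 3)⁻¹) ∨
        r = .of 0 * .of 0 * .of 3 ∨
        r = (.of 1) ^ (3 : ℤ) * (.of 3) ^ b₂ ∨
        r = (.of 2) ^ (6 : ℤ) * (.of 3) ^ b₃ ∨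
        r = .of 0 * .of 1 * .of 2 * (.of 3) ^ (-b) }

theorem abelianization_M236 (b b₂ b₃ : ℤ) (h₂ : b₂ = 1 ∨ b₂ = 2) (h₃ : b₃ = 1 ∨ b₃ = 5)
    (hc : 0 < 6 * b + 3 + 2 * b₂ + b₃) :
    ∃ e : Abelianization (PresentedGroup (rels236 b b₂ b₃)) ≃*
        Multiplicative (ZMod (6 * (6 * b + 3 + 2 * b₂ + b₃)).toNat),
      e (Abelianization.of (PresentedGroup.of 1 * (PresentedGroup.of 0)⁻¹)) =
        Multiplicative.ofAdd 1 ∧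
      e (Abelianization.of (PresentedGroup.of 0)) =
        Multiplicative.ofAdd ((3 * (2 * b₂ - 3) : ℤ) :
          ZMod (6 * (6 * b + 3 + 2 * b₂ + b₃)).toNat) := by
  have hb : b₂ * b₂ = 3 * b₂ - 2 := by rcases h₂ with rfl | rfl <;> norm_num
  set n : ℕ := (6 * (6 * b + 3 + 2 * b₂ + b₃)).toNat with hn
  have hnc : ((n : ℕ) : ℤ) = 6 * (6 * b + 3 + 2 * b₂ + b₃) := by
    rw [hn]; exact Int.toNat_of_nonneg (by linarith)
  have hnZ : ((6 * (6 * b + 3 + 2 * b₂ + b₃) : ℤ) : ZMod n) = 0 := by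
    rw [← hnc]; push_cast; exact ZMod.natCast_self n
  have hnZ' : (6 : ZMod n) * (6 * (b : ZMod n) + 3 + 2 * (b₂ : ZMod n) + (b₃ : ZMod n)) = 0 := by
    push_cast at hnZ; linear_combination hnZ
  have hbZ : ((b₂ : ZMod n)) * (b₂ : ZMod n) = 3 * (b₂ : ZMod n) - 2 := by
    have := congrArg (fun t : ℤ => ((t : ZMod n))) hb
    push_cast at this; exact this
  -- the values of the generators in ZMod n
  set v : Fin 4 → ℤ := ![6*b₂-9, 6*b₂-8, 18*b-12*b*b₂-12*b₂+17, 18-12*b₂] with hv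
  set f : Fin 4 → Multiplicative (ZMod n) :=
    fun i => Multiplicative.ofAdd ((v i : ℤ) : ZMod n) with hf
  have hrels : ∀ r ∈ rels236 b b₂ b₃, FreeGroup.lift f r = 1 := by
    rintro r (⟨i, rfl⟩ | rfl | rfl | rfl | rfl) <;>
      simp only [map_mul, map_inv, map_zpow, FreeGroup.lift_apply_of]
    · rw [mul_comm (f i.castSucc) (f 3), mul_inv_cancel_right, mul_inv_cancel]
    · show Multiplicative.ofAdd ((6*b₂-9 : ℤ) : ZMod n) * Multiplicative.ofAdd ((6*b₂-9 : ℤ) : ZMod n)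
        * Multiplicative.ofAdd ((18-12*b₂ : ℤ) : ZMod n) = 1
      rw [← ofAdd_add, ← ofAdd_add, ← ofAdd_zero]
      congr 1
      push_cast
      ring
    · show Multiplicative.ofAdd ((6*b₂-8 : ℤ) : ZMod n) ^ (3:ℤ)
        * Multiplicative.ofAdd ((18-12*b₂ : ℤ) : ZMod n) ^ b₂ = 1
      rw [← ofAdd_zsmul, ← ofAdd_zsmul, ← ofAdd_add, ← ofAdd_zero]
      congr 1
      simp only [zsmul_eq_mul]
      push_cast
      linear_combination (-12 : ZMod n) * hbZ
    · show Multiplicative.ofAdd ((18*b-12*b*b₂-12*b₂+17 : ℤ) : ZMod n) ^ (6:ℤ)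
        * Multiplicative.ofAdd ((18-12*b₂ : ℤ) : ZMod n) ^ b₃ = 1
      rw [← ofAdd_zsmul, ← ofAdd_zsmul, ← ofAdd_add, ← ofAdd_zero]
      congr 1
      simp only [zsmul_eq_mul]
      push_cast
      linear_combination ((3 : ZMod n) - 2*(b₂ : ZMod n)) * hnZ' + (24 : ZMod n) * hbZ
    · show Multiplicative.ofAdd ((6*b₂-9 : ℤ) : ZMod n) * Multiplicative.ofAdd ((6*b₂-8 : ℤ) : ZMod n)
        * Multiplicative.ofAdd ((18*b-12*b*b₂-12*b₂+17 : ℤ) : ZMod n)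
        * Multiplicative.ofAdd ((18-12*b₂ : ℤ) : ZMod n) ^ (-b) = 1
      rw [← ofAdd_zsmul, ← ofAdd_add, ← ofAdd_add, ← ofAdd_add, ← ofAdd_zero]
      congr 1
      simp only [zsmul_eq_mul]
      push_cast
      ring
  -- the forward homomorphism
  set φ₀ : PresentedGroup (rels236 b b₂ b₃) →* Multiplicative (ZMod n) :=
    PresentedGroup.toGroup hrels with hφ₀
  set φ : Abelianization (PresentedGroup (rels236 b b₂ b₃)) →* Multiplicative (ZMod n) :=
    Abelianization.lift φ₀ with hφ
  -- images of generators in the abelianization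
  set π : FreeGroup (Fin 4) →* PresentedGroup (rels236 b b₂ b₃) :=
    QuotientGroup.mk' (Subgroup.normalClosure (rels236 b b₂ b₃)) with hπ'
  set q : FreeGroup (Fin 4) →* Abelianization (PresentedGroup (rels236 b b₂ b₃)) :=
    Abelianization.of.comp π with hq'
  have hq : ∀ r ∈ rels236 b b₂ b₃, q r = 1 := by
    intro r hr
    rw [hq', MonoidHom.comp_apply]
    have hone : π r = 1 := (QuotientGroup.eq_one_iff r).mpr (Subgroup.subset_normalClosure hr)
    rw [hone, map_one]
  set u : Fin 4 → Abelianization (PresentedGroup (rels236 b b₂ b₃)) :=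
    fun i => q (FreeGroup.of i) with hu
  have hu' : ∀ i : Fin 4, u i = Abelianization.of (PresentedGroup.of i) := fun i => rfl
  -- relations in additive form
  have m1 : u 0 * u 0 * u 3 = 1 := by
    have := hq _ (Or.inr (Or.inl rfl)); simpa only [map_mul] using this
  have m2 : u 1 ^ (3:ℤ) * u 3 ^ b₂ = 1 := by
    have := hq _ (Or.inr (Or.inr (Or.inl rfl))); simpa only [map_mul, map_zpow] using this
  have m3 : u 2 ^ (6:ℤ) * u 3 ^ b₃ = 1 := by
    have := hq _ (Or.inr (Or.inr (Or.inr (Or.inl rfl)))); simpa only [map_mul, map_zpow] using this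
  have m4 : u 0 * u 1 * u 2 * u 3 ^ (-b) = 1 := by
    have := hq _ (Or.inr (Or.inr (Or.inr (Or.inr rfl)))); simpa only [map_mul, map_zpow] using this
  set X : Additive (Abelianization (PresentedGroup (rels236 b b₂ b₃))) := Additive.ofMul (u 0)
  set Y : Additive (Abelianization (PresentedGroup (rels236 b b₂ b₃))) := Additive.ofMul (u 1)
  set Z : Additive (Abelianization (PresentedGroup (rels236 b b₂ b₃))) := Additive.ofMul (u 2)
  set H : Additive (Abelianization (PresentedGroup (rels236 b b₂ b₃))) := Additive.ofMul (u 3)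
  have r1 : (2:ℤ) • X + H = 0 := by
    have : u 0 ^ (2:ℤ) * u 3 = 1 := by rw [zpow_two]; exact m1
    exact this
  have r2 : (3:ℤ) • Y + b₂ • H = 0 := m2
  have r3 : (6:ℤ) • Z + b₃ • H = 0 := m3
  have r4 : X + Y + Z + (-b) • H = 0 := m4
  obtain ⟨hord, hX, hY, hZ, hH⟩ := key_module_M236 b b₂ b₃ hb X Y Z H r1 r2 r3 r4
  rw [sub_eq_add_neg] at hord hX hY hZ hH
  -- multiplicative forms
  set g : Abelianization (PresentedGroup (rels236 b b₂ b₃)) := u 1 * (u 0)⁻¹ with hg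
  have mord : g ^ ((6*(6*b+3+2*b₂+b₃)) : ℤ) = 1 := hord
  have mX : g ^ ((6*b₂-9) : ℤ) = u 0 := hX
  have mY : g ^ ((6*b₂-8) : ℤ) = u 1 := hY
  have mZ : g ^ ((18*b-12*b*b₂-12*b₂+17) : ℤ) = u 2 := hZ
  have mH : g ^ ((18-12*b₂) : ℤ) = u 3 := hH
  -- the backward homomorphism
  set ψ₀ : ℤ →+ Additive (Abelianization (PresentedGroup (rels236 b b₂ b₃))) :=
    zmultiplesHom _ (Additive.ofMul g) with hψ₀
  have hψ₀n : ψ₀ (n : ℤ) = 0 := by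
    show ((n : ℤ)) • Additive.ofMul g = 0
    rw [hnc]
    exact mord
  set ψ₁ : ZMod n →+ Additive (Abelianization (PresentedGroup (rels236 b b₂ b₃))) :=
    ZMod.lift n ⟨ψ₀, hψ₀n⟩ with hψ₁
  set ψ : Multiplicative (ZMod n) →* Abelianization (PresentedGroup (rels236 b b₂ b₃)) :=
    AddMonoidHom.toMultiplicativeLeft ψ₁ with hψ
  have hψ_int : ∀ k : ℤ, ψ (Multiplicative.ofAdd ((k : ZMod n))) = g ^ k := by
    intro k
    show Additive.toMul (ψ₁ ((k : ZMod n))) = g ^ k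
    rw [hψ₁, ZMod.lift_coe]
    rfl
  -- values of φ on generators
  have hφ_gen : ∀ i : Fin 4, φ (Abelianization.of (PresentedGroup.of i)) =
      Multiplicative.ofAdd ((v i : ℤ) : ZMod n) := by
    intro i
    rw [hφ, Abelianization.lift_apply_of, hφ₀, PresentedGroup.toGroup.of]
  -- ψ ∘ φ = id
  have comp1 : ψ.comp φ = MonoidHom.id _ := by
    apply Abelianization.hom_ext
    apply PresentedGroup.ext
    intro x
    simp only [MonoidHom.comp_apply, MonoidHom.id_apply]
    rw [hφ_gen x, hψ_int (v x), ← hu' x]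
    fin_cases x
    · exact mX
    · exact mY
    · exact mZ
    · exact mH
  -- φ ∘ ψ = id
  have comp2 : φ.comp ψ = MonoidHom.id _ := by
    refine MonoidHom.ext fun x => ?_
    obtain ⟨k, hk⟩ := ZMod.intCast_surjective (Multiplicative.toAdd x)
    have hx : x = Multiplicative.ofAdd ((k : ZMod n)) := by rw [hk]; rfl
    subst hx
    simp only [MonoidHom.comp_apply, MonoidHom.id_apply]
    rw [hψ_int k, map_zpow, hg, map_mul, map_inv, hu' 0, hu' 1, hφ_gen 0, hφ_gen 1,
      ← ofAdd_neg, ← ofAdd_add, ← ofAdd_zsmul]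
    congr 1
    show (k : ℤ) • (((v 1 : ℤ) : ZMod n) + -((v 0 : ℤ) : ZMod n)) = ((k : ℤ) : ZMod n)
    have hv10 : ((v 1 : ℤ) : ZMod n) + -((v 0 : ℤ) : ZMod n) = 1 := by
      show (((6*b₂-8 : ℤ) : ZMod n)) + -(((6*b₂-9 : ℤ) : ZMod n)) = 1
      push_cast; ring
    rw [hv10, zsmul_eq_mul]
    push_cast; ring
  refine ⟨MonoidHom.toMulEquiv φ ψ comp1 comp2, ?_, ?_⟩
  · show φ (Abelianization.of (PresentedGroup.of 1 * (PresentedGroup.of 0)⁻¹)) = _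
    simp only [map_mul, map_inv]
    rw [hφ_gen 0, hφ_gen 1, ← ofAdd_neg, ← ofAdd_add]
    congr 1
    show (((6*b₂-8 : ℤ) : ZMod n)) + -(((6*b₂-9 : ℤ) : ZMod n)) = 1
    push_cast; ring
  · show φ (Abelianization.of (PresentedGroup.of 0)) = _
    rw [hφ_gen 0]
    congr 1
    show (((6*b₂-9 : ℤ) : ZMod n)) = _
    push_cast; ring
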